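/- arXiv:1407.7888 — 2 statements merged into one kernel-verified Lean document; each statement's English description precedes it below -/
import Mathlib

section
/- For every κ₀ > 0 and δ ∈ (0,1), there is a constant C₀ > 0 such that for all λ > 0 and all u ∈ (0, δ), the integral ∫₀^δ ds/(λ + κ₀·s + κ₀·|s − u|) is at most C₀·log(1 + C₀/(λ + u/C₀)). -/
/-!
Since `s + |s - u| ≥ (s + u) / 2`, the integrand is dominated by `1 / (a + b s)` with
`a = λ + κ₀ u / 2` and `b = κ₀ / 2`, whose integral over `[0, δ]` is `b⁻¹ log (1 + b δ / a)`.
Any `C₀ ≥ max (1, b, b⁻¹)` then bounds both the prefactor and the argument of the logarithm.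
-/

open Real Set

lemma add_div_two_le_add_abs_sub (s u : ℝ) : (u + s) / 2 ≤ s + |s - u| := by
  cases abs_cases (s - u) <;> linarith

lemma integral_one_div_affine {a b δ : ℝ} (hb : b ≠ 0) (ha : 0 < a) (habδ : 0 < a + b * δ) :
    ∫ s in (0 : ℝ)..δ, 1 / (a + b * s) = b⁻¹ * log (1 + b * δ / a) := by
  have h := intervalIntegral.integral_comp_mul_add (fun x : ℝ => 1 / x) (a := 0) (b := δ) hb a
  simp only [mul_zero, zero_add, add_comm (b * _) a] at h
  rw [h, integral_one_div_of_pos ha habδ, smul_eq_mul, add_div, div_self ha.ne']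

lemma integral_one_div_resolvent_le_affine {κ lam u δ : ℝ} (hκ : 0 ≤ κ) (hlam : 0 < lam)
    (hu : 0 ≤ u) (hδ : 0 ≤ δ) :
    ∫ s in (0 : ℝ)..δ, 1 / (lam + κ * s + κ * |s - u|)
      ≤ ∫ s in (0 : ℝ)..δ, 1 / ((lam + κ / 2 * u) + κ / 2 * s) := by
  have hdom : ∀ s, (lam + κ / 2 * u) + κ / 2 * s ≤ lam + κ * s + κ * |s - u| := by
    intro s
    nlinarith [mul_le_mul_of_nonneg_left (add_div_two_le_add_abs_sub s u) hκ]
  have hpos : ∀ s ∈ Icc (0 : ℝ) δ, 0 < (lam + κ / 2 * u) + κ / 2 * s := by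
    intro s hs
    have := hs.1
    positivity
  refine intervalIntegral.integral_mono_on hδ ?_ ?_ fun s hs =>
    one_div_le_one_div_of_le (hpos s hs) (hdom s)
  all_goals
    refine ContinuousOn.intervalIntegrable (ContinuousOn.div (by fun_prop) (by fun_prop) ?_)
    rw [uIcc_of_le hδ]
    intro s hs
  · exact ((hpos s hs).trans_le (hdom s)).ne'
  · exact (hpos s hs).ne'

lemma mul_div_le_div_add_div {b C δ lam u : ℝ} (hb : 0 < b) (hC1 : 1 ≤ C) (hbC : b ≤ C)
    (hδ1 : δ ≤ 1) (hlam : 0 < lam) (hu : 0 ≤ u) :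
    b * δ / (lam + b * u) ≤ C / (lam + u / C) := by
  have hC : 0 < C := one_pos.trans_le hC1
  rw [div_le_div_iff₀ (by positivity) (by positivity)]
  have hδu : δ * (u / C) ≤ C * u := by
    calc δ * (u / C) ≤ 1 * u := mul_le_mul hδ1 (div_le_self hu hC1) (by positivity) zero_le_one
      _ ≤ C * u := mul_le_mul_of_nonneg_right hC1 hu
  have hbδ : b * δ ≤ C := by nlinarith
  nlinarith [mul_le_mul_of_nonneg_left hδu hb.le, mul_le_mul_of_nonneg_right hbδ hlam.le]

theorem stmt_7_general (κ₀ δ : ℝ) (hκ : 0 < κ₀) (hδ1 : δ < 1) :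
    ∃ C₀ : ℝ, 0 < C₀ ∧ ∀ lam u : ℝ, 0 < lam → 0 < u → u < δ →
      (∫ s in (0:ℝ)..δ, 1 / (lam + κ₀ * s + κ₀ * |s - u|))
        ≤ C₀ * Real.log (1 + C₀ / (lam + u / C₀)) := by
  set b := κ₀ / 2
  set C₀ := b⁻¹ + b + 1
  have hb : 0 < b := by positivity
  have hbinv : b⁻¹ ≤ C₀ := by linarith
  have hC1 : 1 ≤ C₀ := by linarith [inv_pos.2 hb]
  have hbC : b ≤ C₀ := by linarith [inv_pos.2 hb]
  refine ⟨C₀, by positivity, fun lam u hlam hu huδ => ?_⟩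
  have hδ : 0 ≤ δ := (hu.trans huδ).le
  have ha : 0 < lam + b * u := by positivity
  calc (∫ s in (0:ℝ)..δ, 1 / (lam + κ₀ * s + κ₀ * |s - u|))
      ≤ ∫ s in (0:ℝ)..δ, 1 / ((lam + b * u) + b * s) :=
        integral_one_div_resolvent_le_affine hκ.le hlam hu.le hδ
    _ = b⁻¹ * log (1 + b * δ / (lam + b * u)) :=
        integral_one_div_affine hb.ne' ha (by positivity)
    _ ≤ C₀ * log (1 + C₀ / (lam + u / C₀)) := by
        have harg := mul_div_le_div_add_div (u := u) hb hC1 hbC hδ1.le hlam hu.le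
        gcongr
        exact log_nonneg (by linarith [div_nonneg (mul_nonneg hb.le hδ) ha.le])

theorem stmt_7 (κ₀ δ : ℝ) (hκ : 0 < κ₀) (hδ : 0 < δ) (hδ1 : δ < 1) :
    ∃ C₀ : ℝ, 0 < C₀ ∧ ∀ lam u : ℝ, 0 < lam → 0 < u → u < δ →
      (∫ s in (0:ℝ)..δ, 1 / (lam + κ₀ * s + κ₀ * |s - u|))
        ≤ C₀ * Real.log (1 + C₀ / (lam + u / C₀)) :=
  stmt_7_general κ₀ δ hκ hδ1
end

section
/- Fix α ∈ (1,2) and a continuous function θ: [0,1] → [0,∞) with θ(k) ~ a·k^α as k → 0⁺ for some a > 0 and θ(k) > 0 for k ∈ (0,1]. Then as t → ∞, ∫₀^{1/2} [(1 − e^{−θ(k)·t})/θ(k)]² dk ~ t^{2 − 1/α}·∫₀^∞ [(1 − e^{−a·ℓ^α})/(a·ℓ^α)]² dℓ, where the limiting integral is finite. -/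
/-!
Write `G x = ((1 - e^{-x}) / x)²`. Substituting `k = t^{-1/α} ℓ` turns the integral over
`(0, b]` into `t^{2 - 1/α} ∫_0^{t^{1/α} b} G(θ(t^{-1/α} ℓ) t) dℓ`, and
`θ(t^{-1/α} ℓ) t → a ℓ^α` pointwise. The asymptotics near `0` together with compactness
away from `0` give `θ k ≥ m k^α` on `(0, 1]`, so by `G x ≤ min 1 x⁻²` the rescaled
integrands are dominated by `min 1 (m ℓ^α)⁻²`, which is integrable since `2α > 1`;
dominated convergence concludes.
-/

open MeasureTheory Filter Set Topology

noncomputable def oneSubExpNegDivSq (x : ℝ) : ℝ := ((1 - Real.exp (-x)) / x) ^ 2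

lemma measurable_oneSubExpNegDivSq : Measurable oneSubExpNegDivSq := by
  unfold oneSubExpNegDivSq; fun_prop

lemma continuousAt_oneSubExpNegDivSq {x : ℝ} (hx : x ≠ 0) :
    ContinuousAt oneSubExpNegDivSq x := by
  unfold oneSubExpNegDivSq; fun_prop (disch := exact hx)

lemma oneSubExpNegDivSq_pos {x : ℝ} (hx : 0 < x) : 0 < oneSubExpNegDivSq x := by
  have : Real.exp (-x) < 1 := Real.exp_lt_one_iff.2 (neg_neg_of_pos hx)
  unfold oneSubExpNegDivSq; exact pow_pos (div_pos (by linarith) hx) 2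

lemma oneSubExpNegDivSq_le_min {x : ℝ} (hx : 0 < x) :
    oneSubExpNegDivSq x ≤ min 1 (x⁻¹ ^ 2) := by
  have hle : Real.exp (-x) ≤ 1 := Real.exp_le_one_iff.2 (by linarith)
  have hge : 1 - x ≤ Real.exp (-x) := by linarith [Real.add_one_le_exp (-x)]
  have hnonneg : 0 ≤ (1 - Real.exp (-x)) / x := div_nonneg (by linarith) hx.le
  refine le_min ?_ ?_
  · exact pow_le_one₀ hnonneg ((div_le_one hx).2 (by linarith))
  · rw [inv_eq_one_div]
    have hnum : 1 - Real.exp (-x) ≤ 1 := by linarith [Real.exp_pos (-x)]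
    exact pow_le_pow_left₀ hnonneg (div_le_div_of_nonneg_right hnum hx.le) 2

lemma sq_one_sub_exp_neg_mul_div_eq {t : ℝ} (ht : t ≠ 0) (y : ℝ) :
    ((1 - Real.exp (-(y * t))) / y) ^ 2 = t ^ 2 * oneSubExpNegDivSq (y * t) := by
  rcases eq_or_ne y 0 with rfl | hy
  · simp [oneSubExpNegDivSq]
  · unfold oneSubExpNegDivSq; field_simp

lemma integrableOn_min_one_inv_mul_rpow_sq {α : ℝ} (hα : 1 < 2 * α) (m : ℝ) :
    IntegrableOn (fun ℓ : ℝ => min 1 ((m * ℓ ^ α)⁻¹ ^ 2)) (Ioi 0) := by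
  have hmeas : AEStronglyMeasurable (fun ℓ : ℝ => min 1 ((m * ℓ ^ α)⁻¹ ^ 2)) volume := by
    fun_prop
  have hnonneg : ∀ ℓ : ℝ, 0 ≤ min 1 ((m * ℓ ^ α)⁻¹ ^ 2) := fun ℓ =>
    le_min zero_le_one (sq_nonneg _)
  have hnear : IntegrableOn (fun ℓ : ℝ => min 1 ((m * ℓ ^ α)⁻¹ ^ 2)) (Ioc 0 1) := by
    refine Integrable.mono' (integrableOn_const (C := (1 : ℝ)) measure_Ioc_lt_top.ne)
      hmeas.restrict (ae_of_all _ fun ℓ => ?_)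
    rw [Real.norm_of_nonneg (hnonneg ℓ)]
    exact min_le_left _ _
  have hfar : IntegrableOn (fun ℓ : ℝ => min 1 ((m * ℓ ^ α)⁻¹ ^ 2)) (Ioi 1) := by
    have hdecay : IntegrableOn (fun ℓ : ℝ => ℓ ^ (-(2 * α))) (Ioi 1) :=
      integrableOn_Ioi_rpow_of_lt (by linarith) one_pos
    refine Integrable.mono' (hdecay.const_mul (m⁻¹ ^ 2)) hmeas.restrict
      ((ae_restrict_iff' measurableSet_Ioi).2 (ae_of_all _ fun ℓ (hℓ : 1 < ℓ) => ?_))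
    have hℓ : 0 ≤ ℓ := by linarith
    rw [Real.norm_of_nonneg (hnonneg ℓ), mul_comm 2 α, Real.rpow_neg hℓ, Real.rpow_mul hℓ,
      Real.rpow_two, ← inv_pow, ← mul_pow, ← mul_inv]
    exact min_le_right _ _
  rw [← Ioc_union_Ioi_eq_Ioi zero_le_one]
  exact hnear.union hfar

lemma integrableOn_oneSubExpNegDivSq_mul_rpow {α a : ℝ} (hα : 1 < 2 * α) (ha : 0 < a) :
    IntegrableOn (fun ℓ : ℝ => oneSubExpNegDivSq (a * ℓ ^ α)) (Ioi 0) := by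
  refine Integrable.mono' (integrableOn_min_one_inv_mul_rpow_sq hα a)
    (measurable_oneSubExpNegDivSq.comp_aemeasurable (by fun_prop)).aestronglyMeasurable
    ((ae_restrict_iff' measurableSet_Ioi).2 (ae_of_all _ fun ℓ (hℓ : 0 < ℓ) => ?_))
  have hx : 0 < a * ℓ ^ α := by positivity
  rw [Real.norm_of_nonneg (oneSubExpNegDivSq_pos hx).le]
  exact oneSubExpNegDivSq_le_min hx

lemma integral_oneSubExpNegDivSq_mul_rpow_pos {α a : ℝ} (hα : 1 < 2 * α) (ha : 0 < a) :
    0 < ∫ ℓ in Ioi 0, oneSubExpNegDivSq (a * ℓ ^ α) := by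
  rw [setIntegral_pos_iff_support_of_nonneg_ae ?_
    (integrableOn_oneSubExpNegDivSq_mul_rpow hα ha)]
  · have hsupp : Ioi 0 ⊆ Function.support fun ℓ : ℝ => oneSubExpNegDivSq (a * ℓ ^ α) :=
      fun ℓ (hℓ : 0 < ℓ) => (oneSubExpNegDivSq_pos (by positivity : 0 < a * ℓ ^ α)).ne'
    rw [inter_eq_self_of_subset_right hsupp, Real.volume_Ioi]
    exact ENNReal.zero_lt_top
  · exact ae_of_all _ fun ℓ => sq_nonneg _

lemma exists_pos_mul_rpow_le {θ : ℝ → ℝ} {α a : ℝ} (hα : 0 ≤ α) (ha : 0 < a)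
    (hcont : ContinuousOn θ (Icc 0 1)) (hpos : ∀ k ∈ Ioc (0 : ℝ) 1, 0 < θ k)
    (hasymp : Tendsto (fun k => θ k / k ^ α) (𝓝[>] 0) (𝓝 a)) :
    ∃ m > 0, ∀ k ∈ Ioc (0 : ℝ) 1, m * k ^ α ≤ θ k := by
  obtain ⟨δ, hδ, hnear⟩ := (nhdsGT_basis (0 : ℝ)).eventually_iff.1
    (hasymp.eventually (eventually_gt_nhds (half_lt_self ha)))
  set δ' := min δ 1
  have hδ' : 0 < δ' := lt_min hδ one_pos
  obtain ⟨k₀, hk₀, hmin⟩ := isCompact_Icc.exists_isMinOn (nonempty_Icc.2 (min_le_right δ 1))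
    (hcont.mono (Icc_subset_Icc hδ'.le le_rfl))
  have hθk₀ : 0 < θ k₀ := hpos k₀ ⟨hδ'.trans_le hk₀.1, hk₀.2⟩
  refine ⟨min (a / 2) (θ k₀), lt_min (half_pos ha) hθk₀, fun k ⟨hk, hk1⟩ => ?_⟩
  have hkα : 0 < k ^ α := Real.rpow_pos_of_pos hk α
  rcases lt_or_ge k δ' with hkδ | hkδ
  · have hratio := hnear ⟨hk, hkδ.trans_le (min_le_left δ 1)⟩
    rw [lt_div_iff₀ hkα] at hratio
    nlinarith [min_le_left (a / 2) (θ k₀)]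
  · calc min (a / 2) (θ k₀) * k ^ α ≤ θ k₀ * 1 :=
          mul_le_mul (min_le_right _ _) (Real.rpow_le_one hk.le hk1 hα) hkα.le hθk₀.le
      _ ≤ θ k := by rw [mul_one]; exact hmin ⟨hkδ, hk1⟩

lemma rpow_neg_inv_mul_rpow_mul_self {t α ℓ : ℝ} (ht : 0 < t) (hα : α ≠ 0) (hℓ : 0 ≤ ℓ) :
    (t ^ (-α⁻¹) * ℓ) ^ α * t = ℓ ^ α := by
  rw [Real.mul_rpow (by positivity) hℓ, ← Real.rpow_mul ht.le, neg_mul, inv_mul_cancel₀ hα,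
    Real.rpow_neg_one]
  field_simp

lemma rpow_neg_mul_rpow_mul {t : ℝ} (ht : 0 < t) (x b : ℝ) : t ^ (-x) * (t ^ x * b) = b := by
  rw [Real.rpow_neg ht.le, inv_mul_cancel_left₀ (by positivity)]

lemma rpow_neg_mul_mem_Ioc {t x b ℓ : ℝ} (ht : 0 < t) (hℓ : ℓ ∈ Ioc 0 (t ^ x * b)) :
    t ^ (-x) * ℓ ∈ Ioc 0 b := by
  refine ⟨mul_pos (by positivity) hℓ.1, ?_⟩
  calc t ^ (-x) * ℓ ≤ t ^ (-x) * (t ^ x * b) := by gcongr; exact hℓ.2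
    _ = b := rpow_neg_mul_rpow_mul ht x b

noncomputable def rescaledIntegrand (θ : ℝ → ℝ) (α b t : ℝ) : ℝ → ℝ :=
  (Ioc 0 (t ^ α⁻¹ * b)).indicator fun ℓ => oneSubExpNegDivSq (θ (t ^ (-α⁻¹) * ℓ) * t)

lemma intervalIntegral_sq_one_sub_exp_neg_mul_div_eq (θ : ℝ → ℝ) (α : ℝ) {b t : ℝ}
    (hb : 0 ≤ b) (ht : 0 < t) :
    ∫ k in 0..b, ((1 - Real.exp (-(θ k * t))) / θ k) ^ 2 =
      t ^ (2 - α⁻¹) * ∫ ℓ in Ioi 0, rescaledIntegrand θ α b t ℓ := by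
  have hsubst := intervalIntegral.smul_integral_comp_mul_left
    (fun k => ((1 - Real.exp (-(θ k * t))) / θ k) ^ 2) (a := 0) (b := t ^ α⁻¹ * b) (t ^ (-α⁻¹))
  rw [mul_zero, rpow_neg_mul_rpow_mul ht] at hsubst
  rw [← hsubst, rescaledIntegrand, setIntegral_indicator measurableSet_Ioc,
    inter_eq_self_of_subset_right Ioc_subset_Ioi_self,
    ← intervalIntegral.integral_of_le (by positivity)]
  simp only [sq_one_sub_exp_neg_mul_div_eq ht.ne', intervalIntegral.integral_const_mul,
    smul_eq_mul]
  rw [Real.rpow_sub ht, Real.rpow_two, Real.rpow_neg ht.le]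
  ring

lemma aestronglyMeasurable_rescaledIntegrand {θ : ℝ → ℝ} {α b t : ℝ} (hb : b ≤ 1) (ht : 0 < t)
    (hcont : ContinuousOn θ (Icc 0 1)) :
    AEStronglyMeasurable (rescaledIntegrand θ α b t) := by
  refine (aestronglyMeasurable_indicator_iff measurableSet_Ioc).2
    (measurable_oneSubExpNegDivSq.comp_aemeasurable (ContinuousOn.aemeasurable ?_
      measurableSet_Ioc)).aestronglyMeasurable
  refine (hcont.comp (by fun_prop) fun ℓ hℓ => ?_).mul continuousOn_const
  have hk := rpow_neg_mul_mem_Ioc ht hℓ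
  exact ⟨hk.1.le, hk.2.trans hb⟩

lemma norm_rescaledIntegrand_le {θ : ℝ → ℝ} {α b m t ℓ : ℝ} (hα : α ≠ 0) (hb : b ≤ 1)
    (hm : 0 < m) (hmθ : ∀ k ∈ Ioc (0 : ℝ) 1, m * k ^ α ≤ θ k) (ht : 0 < t) (hℓ : 0 < ℓ) :
    ‖rescaledIntegrand θ α b t ℓ‖ ≤ min 1 ((m * ℓ ^ α)⁻¹ ^ 2) := by
  by_cases hin : ℓ ∈ Ioc 0 (t ^ α⁻¹ * b)
  · have hk := rpow_neg_mul_mem_Ioc ht hin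
    have hlow : m * ℓ ^ α ≤ θ (t ^ (-α⁻¹) * ℓ) * t := by
      rw [← rpow_neg_inv_mul_rpow_mul_self ht hα hℓ.le, ← mul_assoc]
      exact mul_le_mul_of_nonneg_right (hmθ _ ⟨hk.1, hk.2.trans hb⟩) ht.le
    have hpos : 0 < m * ℓ ^ α := by positivity
    rw [rescaledIntegrand, indicator_of_mem hin,
      Real.norm_of_nonneg (oneSubExpNegDivSq_pos (hpos.trans_le hlow)).le]
    refine (oneSubExpNegDivSq_le_min (hpos.trans_le hlow)).trans ?_
    have hinv : 0 ≤ (θ (t ^ (-α⁻¹) * ℓ) * t)⁻¹ := inv_nonneg.2 (hpos.trans_le hlow).le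
    gcongr
  · rw [rescaledIntegrand, indicator_of_notMem hin, norm_zero]
    exact le_min zero_le_one (sq_nonneg _)

lemma tendsto_mul_of_tendsto_div_rpow {θ : ℝ → ℝ} {α a ℓ : ℝ} (hα : 0 < α)
    (hasymp : Tendsto (fun k => θ k / k ^ α) (𝓝[>] 0) (𝓝 a)) (hℓ : 0 < ℓ) :
    Tendsto (fun t => θ (t ^ (-α⁻¹) * ℓ) * t) atTop (𝓝 (a * ℓ ^ α)) := by
  have hk : Tendsto (fun t : ℝ => t ^ (-α⁻¹) * ℓ) atTop (𝓝[>] 0) := by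
    refine tendsto_nhdsWithin_iff.2 ⟨?_, ?_⟩
    · simpa using (tendsto_rpow_neg_atTop (inv_pos.2 hα)).mul_const ℓ
    · filter_upwards [eventually_gt_atTop 0] with t ht
      exact mul_pos (by positivity) hℓ
  refine ((hasymp.comp hk).mul_const (ℓ ^ α)).congr' ?_
  filter_upwards [eventually_gt_atTop 0] with t ht
  have hkα : 0 < (t ^ (-α⁻¹) * ℓ) ^ α := by positivity
  rw [Function.comp_apply, ← rpow_neg_inv_mul_rpow_mul_self ht hα.ne' hℓ.le]
  field_simp

lemma tendsto_rescaledIntegrand {θ : ℝ → ℝ} {α a b ℓ : ℝ} (hα : 0 < α) (ha : 0 < a)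
    (hb : 0 < b) (hasymp : Tendsto (fun k => θ k / k ^ α) (𝓝[>] 0) (𝓝 a)) (hℓ : 0 < ℓ) :
    Tendsto (fun t => rescaledIntegrand θ α b t ℓ) atTop
      (𝓝 (oneSubExpNegDivSq (a * ℓ ^ α))) := by
  refine ((continuousAt_oneSubExpNegDivSq (by positivity)).tendsto.comp
    (tendsto_mul_of_tendsto_div_rpow hα hasymp hℓ)).congr' ?_
  have hcut : Tendsto (fun t : ℝ => t ^ α⁻¹ * b) atTop atTop :=
    (tendsto_rpow_atTop (inv_pos.2 hα)).atTop_mul_const hb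
  filter_upwards [hcut.eventually_ge_atTop ℓ] with t ht
  rw [rescaledIntegrand, indicator_of_mem (show ℓ ∈ Ioc 0 (t ^ α⁻¹ * b) from ⟨hℓ, ht⟩),
    Function.comp_apply]

lemma tendsto_integral_rescaledIntegrand {θ : ℝ → ℝ} {α a b : ℝ} (hα : 1 < 2 * α)
    (ha : 0 < a) (hb : b ∈ Ioc 0 1) (hcont : ContinuousOn θ (Icc 0 1))
    (hpos : ∀ k ∈ Ioc (0 : ℝ) 1, 0 < θ k)
    (hasymp : Tendsto (fun k => θ k / k ^ α) (𝓝[>] 0) (𝓝 a)) :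
    Tendsto (fun t => ∫ ℓ in Ioi 0, rescaledIntegrand θ α b t ℓ) atTop
      (𝓝 (∫ ℓ in Ioi 0, oneSubExpNegDivSq (a * ℓ ^ α))) := by
  have hα0 : 0 < α := by linarith
  obtain ⟨m, hm, hmθ⟩ := exists_pos_mul_rpow_le hα0.le ha hcont hpos hasymp
  refine tendsto_integral_filter_of_dominated_convergence _ ?_ ?_
    (integrableOn_min_one_inv_mul_rpow_sq hα m) ?_
  · filter_upwards [eventually_gt_atTop 0] with t ht
    exact (aestronglyMeasurable_rescaledIntegrand hb.2 ht hcont).restrict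
  · filter_upwards [eventually_gt_atTop 0] with t ht
    exact (ae_restrict_iff' measurableSet_Ioi).2 (ae_of_all _ fun ℓ hℓ =>
      norm_rescaledIntegrand_le hα0.ne' hb.2 hm hmθ ht hℓ)
  · exact (ae_restrict_iff' measurableSet_Ioi).2 (ae_of_all _ fun ℓ hℓ =>
      tendsto_rescaledIntegrand hα0 ha hb.1 hasymp hℓ)

theorem stmt_17_general (α a : ℝ) (hα : 1 < α) (ha : 0 < a)
    (θ : ℝ → ℝ) (hcont : ContinuousOn θ (Set.Icc 0 1))
    (hpos : ∀ k : ℝ, k ∈ Set.Ioc (0:ℝ) 1 → 0 < θ k)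
    (hasymp : Filter.Tendsto (fun k : ℝ => θ k / k ^ α)
      (nhdsWithin 0 (Set.Ioi 0)) (nhds a)) :
    IntegrableOn (fun ℓ : ℝ => ((1 - Real.exp (-(a * ℓ ^ α))) / (a * ℓ ^ α)) ^ 2)
      (Set.Ioi 0) ∧
    Filter.Tendsto (fun t : ℝ =>
        (∫ k in (0:ℝ)..(1/2), ((1 - Real.exp (-(θ k * t))) / θ k) ^ 2) /
        (t ^ (2 - 1 / α) *
          ∫ ℓ in Set.Ioi (0:ℝ), ((1 - Real.exp (-(a * ℓ ^ α))) / (a * ℓ ^ α)) ^ 2))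
      Filter.atTop (nhds 1) := by
  have hα2 : 1 < 2 * α := by linarith
  refine ⟨integrableOn_oneSubExpNegDivSq_mul_rpow hα2 ha, ?_⟩
  have hJ := integral_oneSubExpNegDivSq_mul_rpow_pos hα2 ha
  have hlim := (tendsto_integral_rescaledIntegrand hα2 ha ⟨one_half_pos, one_half_lt_one.le⟩
    hcont hpos hasymp).div_const (∫ ℓ in Ioi 0, oneSubExpNegDivSq (a * ℓ ^ α))
  rw [div_self hJ.ne'] at hlim
  refine hlim.congr' ?_
  filter_upwards [eventually_gt_atTop 0] with t ht
  rw [intervalIntegral_sq_one_sub_exp_neg_mul_div_eq θ α one_half_pos.le ht, one_div α,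
    mul_div_mul_left _ _ (by positivity)]
  rfl

theorem stmt_17 (α a : ℝ) (hα : 1 < α) (hα2 : α < 2) (ha : 0 < a)
    (θ : ℝ → ℝ) (hcont : ContinuousOn θ (Set.Icc 0 1))
    (hpos : ∀ k : ℝ, k ∈ Set.Ioc (0:ℝ) 1 → 0 < θ k)
    (hasymp : Filter.Tendsto (fun k : ℝ => θ k / k ^ α)
      (nhdsWithin 0 (Set.Ioi 0)) (nhds a)) :
    IntegrableOn (fun ℓ : ℝ => ((1 - Real.exp (-(a * ℓ ^ α))) / (a * ℓ ^ α)) ^ 2)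
      (Set.Ioi 0) ∧
    Filter.Tendsto (fun t : ℝ =>
        (∫ k in (0:ℝ)..(1/2), ((1 - Real.exp (-(θ k * t))) / θ k) ^ 2) /
        (t ^ (2 - 1 / α) *
          ∫ ℓ in Set.Ioi (0:ℝ), ((1 - Real.exp (-(a * ℓ ^ α))) / (a * ℓ ^ α)) ^ 2))
      Filter.atTop (nhds 1) :=
  stmt_17_general α a hα ha θ hcont hpos hasymp
end
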